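/- For all n ≥ 0, k ∈ ℤ, and any fixed positive integer d, the degenerate poly-Bernoulli polynomials satisfy the multiplication-type formula β_n^{(k)}(x|λ) = Σ_{a=0}^{d−1} Σ_{l=0}^{n} Σ_{p=1}^{l+1} C(n,l) ((−1)^{p+l+1}/p^k) p! (S_2(l+1,p)/(l+1)) β_{n−l}((a+x)/d | λ/d) d^{n−l−1}. -/

import Mathlib

open Finset

/-- The generalized falling factorial `(x|λ)ₙ = x(x−λ)(x−2λ)⋯(x−(n−1)λ)`. -/
noncomputable def genFall (lam x : ℂ) (n : ℕ) : ℂ :=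
  ∏ i ∈ Finset.range n, (x - (i : ℂ) * lam)

/-- The formal power series `(1+λt)^{x/λ} = Σ_{n≥0} (x|λ)ₙ tⁿ/n!`. -/
noncomputable def degExp (lam x : ℂ) : PowerSeries ℂ :=
  PowerSeries.mk fun n => genFall lam x n / (n.factorial : ℂ)

/-- The formal power series `1 - e^{-t}`. -/
noncomputable def oneSubExpNeg : PowerSeries ℂ :=
  PowerSeries.mk fun n => if n = 0 then 0 else -((-1 : ℂ) ^ n) / (n.factorial : ℂ)

/-- The formal power series `Li_k(1 - e^{-t}) = Σ_{n≥1} (1-e^{-t})ⁿ/nᵏ`; since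
`(1-e^{-t})ⁿ` has order at least `n`, the coefficient of `tˡ` only involves `n ≤ l`. -/
noncomputable def polyLogComp (k : ℤ) : PowerSeries ℂ :=
  PowerSeries.mk fun l =>
    ∑ n ∈ Finset.Icc 1 l, ((n : ℂ) ^ k)⁻¹ * PowerSeries.coeff l (oneSubExpNeg ^ n)

/-- Stirling numbers of the second kind `S₂(n, k)`. -/
def S2 : ℕ → ℕ → ℕ
  | 0, 0 => 1
  | 0, _ + 1 => 0
  | _ + 1, 0 => 0
  | n + 1, k + 1 => (k + 1) * S2 n (k + 1) + S2 n k


/-!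
Both generating functions carry the factor `(1+λt)^{1/λ} - 1`, which can be cancelled in the
integral domain `ℂ⟦X⟧`. Writing `Li_k(1-e^{-t}) = t·M(t)`, the two defining relations show that
the exponential generating function of `βₙ⁽ᵏ⁾(x|λ)` is `M(t)` times that of `βₙ(x|λ)`, so
`βₙ⁽ᵏ⁾(x|λ)` is a binomial convolution of the coefficients of `M` with the `β_{n-l}(x|λ)`.
The coefficients of `M` come from `(1-e^{-t})^p = Σₘ (-1)^{m+p} p! S₂(m,p) tᵐ/m!`, proved by
comparing coefficients in `((1-e^{-t})^p)' = p(1-e^{-t})^{p-1}(1-(1-e^{-t}))`. Finally each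
`βₘ(x|λ)` is expanded by `βₘ(x|λ) = Σ_{a<d} d^{m-1} βₘ((a+x)/d | λ/d)`, which follows from
rescaling `t ↦ dt` and the geometric sum
`(1+λt)^{d/λ} - 1 = ((1+λt)^{1/λ} - 1) Σ_{a<d} (1+λt)^{a/λ}`.
-/

open PowerSeries

section Egf

variable {K : Type*} [Field K]

noncomputable def egf (f : ℕ → K) : K⟦X⟧ :=
  mk fun n => f n / n.factorial

theorem coeff_egf (f : ℕ → K) (n : ℕ) : coeff n (egf f) = f n / n.factorial :=
  coeff_mk _ _

variable [CharZero K]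

theorem egf_injective : Function.Injective (egf (K := K)) := by
  intro f g h
  funext n
  have := congrArg (coeff n) h
  rwa [coeff_egf, coeff_egf, div_left_inj' (by simp [Nat.factorial_ne_zero])] at this

theorem egf_factorial_mul_coeff (φ : K⟦X⟧) : egf (fun n => n.factorial * coeff n φ) = φ := by
  ext n
  rw [coeff_egf, mul_div_cancel_left₀ _ (by simp [Nat.factorial_ne_zero])]

theorem egf_mul (f g : ℕ → K) :
    egf f * egf g = egf fun n => ∑ ij ∈ antidiagonal n, n.choose ij.1 * f ij.1 * g ij.2 := by
  ext n
  rw [coeff_mul, coeff_egf, sum_div]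
  refine sum_congr rfl fun ⟨i, j⟩ hij => ?_
  obtain rfl : i + j = n := mem_antidiagonal.mp hij
  have hfac : ((i + j).choose i * i.factorial * j.factorial : K) = (i + j).factorial := by
    have := Nat.choose_mul_factorial_mul_factorial (Nat.le_add_right i j)
    rw [Nat.add_sub_cancel_left] at this
    exact_mod_cast this
  have hchoose : ((i + j).choose i : K) ≠ 0 := by simp [Nat.choose_ne_zero]
  rw [coeff_egf, coeff_egf, ← hfac]
  field_simp

end Egf

theorem genFall_zero (lam x : ℂ) : genFall lam x 0 = 1 :=
  prod_range_zero _

theorem genFall_succ (lam x : ℂ) (n : ℕ) :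
    genFall lam x (n + 1) = genFall lam x n * (x - n * lam) :=
  prod_range_succ _ _

theorem genFall_add (lam u v : ℂ) (n : ℕ) :
    genFall lam (u + v) n =
      ∑ ij ∈ antidiagonal n, n.choose ij.1 * genFall lam u ij.1 * genFall lam v ij.2 := by
  induction n with
  | zero => simp [genFall_zero]
  | succ n ih =>
    simp only [mul_assoc]
    rw [sum_antidiagonal_choose_succ_mul (fun i j => genFall lam u i * genFall lam v j),
      ← sum_add_distrib, genFall_succ, ih, sum_mul]
    refine sum_congr rfl fun ⟨i, j⟩ hij => ?_
    obtain rfl : i + j = n := mem_antidiagonal.mp hij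
    rw [← Nat.choose_symm_add, genFall_succ, genFall_succ]
    push_cast
    ring

theorem genFall_mul_mul (c lam x : ℂ) (n : ℕ) :
    genFall (c * lam) (c * x) n = c ^ n * genFall lam x n := by
  induction n with
  | zero => simp [genFall_zero]
  | succ n ih => rw [genFall_succ, genFall_succ, ih]; ring

theorem degExp_eq_egf (lam x : ℂ) : degExp lam x = egf (genFall lam x) := rfl

theorem degExp_add (lam u v : ℂ) : degExp lam (u + v) = degExp lam u * degExp lam v := by
  rw [degExp_eq_egf, funext (genFall_add lam u v), ← egf_mul]
  rfl

theorem degExp_zero (lam : ℂ) : degExp lam 0 = 1 := by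
  ext n
  rcases n with _ | n
  · simp [degExp_eq_egf, coeff_egf, genFall_zero]
  · simp [degExp_eq_egf, coeff_egf, genFall, prod_range_succ', coeff_one]

theorem degExp_one_pow (lam : ℂ) (m : ℕ) : degExp lam 1 ^ m = degExp lam m := by
  induction m with
  | zero => simp [degExp_zero]
  | succ m ih => rw [pow_succ, ih, ← degExp_add, Nat.cast_succ]

theorem rescale_degExp (c lam x : ℂ) : rescale c (degExp lam x) = degExp (c * lam) (c * x) := by
  ext n
  simp only [coeff_rescale, degExp_eq_egf, coeff_egf, genFall_mul_mul]
  ring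

theorem constantCoeff_degExp (lam x : ℂ) : constantCoeff (degExp lam x) = 1 := by
  simp [← coeff_zero_eq_constantCoeff_apply, degExp_eq_egf, coeff_egf, genFall_zero]

theorem degExp_one_sub_one_ne_zero (lam : ℂ) : degExp lam 1 - 1 ≠ 0 := by
  intro h
  have := congrArg (coeff 1) h
  simp [degExp_eq_egf, coeff_egf, genFall_succ, genFall_zero, coeff_one] at this

theorem constantCoeff_oneSubExpNeg : constantCoeff oneSubExpNeg = 0 := by
  simp [← coeff_zero_eq_constantCoeff_apply, oneSubExpNeg]

theorem derivative_oneSubExpNeg : d⁄dX ℂ oneSubExpNeg = 1 - oneSubExpNeg := by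
  ext m
  rcases m with _ | m
  · simp [coeff_derivative, oneSubExpNeg]
  · simp only [coeff_derivative, oneSubExpNeg, map_sub, coeff_mk, coeff_one, Nat.add_one_ne_zero,
      if_false, Nat.factorial_succ (m + 1), pow_succ]
    have hfac : ((m + 1).factorial : ℂ) ≠ 0 := by simp [Nat.factorial_ne_zero]
    have hm : (m + 1 + 1 : ℂ) ≠ 0 := by exact_mod_cast Nat.succ_ne_zero (m + 1)
    push_cast
    field_simp
    ring

theorem coeff_oneSubExpNeg_pow_mul_factorial (m p : ℕ) :
    coeff m (oneSubExpNeg ^ p) * m.factorial = (-1) ^ (m + p) * p.factorial * S2 m p := by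
  induction m generalizing p with
  | zero =>
    rcases p with _ | p <;>
      simp [coeff_zero_eq_constantCoeff_apply, constantCoeff_oneSubExpNeg, S2]
  | succ m ih =>
    rcases p with _ | p
    · simp [coeff_one, S2]
    have hderiv := congrArg (coeff m) (Derivation.leibniz_pow (d⁄dX ℂ) oneSubExpNeg (p + 1))
    rw [derivative_oneSubExpNeg, Nat.add_sub_cancel, smul_eq_mul, mul_sub, mul_one, ← pow_succ,
      coeff_derivative, map_nsmul, map_sub, nsmul_eq_mul] at hderiv
    have h₁ := ih p
    have h₂ := ih (p + 1)
    rw [show m + 1 + (p + 1) = m + p + 1 + 1 by omega]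
    rw [show m + (p + 1) = m + p + 1 by omega] at h₂
    simp only [S2, Nat.factorial_succ, pow_succ (-1 : ℂ)] at h₂ ⊢
    push_cast at hderiv h₂ ⊢
    linear_combination (m.factorial : ℂ) * hderiv + (p + 1 : ℂ) * h₁ - (p + 1 : ℂ) * h₂

theorem constantCoeff_polyLogComp (k : ℤ) : constantCoeff (polyLogComp k) = 0 := by
  rw [← coeff_zero_eq_constantCoeff_apply, polyLogComp, coeff_mk]
  simp

theorem factorial_mul_coeff_succ_polyLogComp (k : ℤ) (l : ℕ) :
    l.factorial * coeff (l + 1) (polyLogComp k) =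
      ∑ p ∈ Icc 1 (l + 1),
        (-1) ^ (p + l + 1) / (p : ℂ) ^ k * p.factorial * ((S2 (l + 1) p : ℂ) / ((l : ℂ) + 1)) := by
  rw [polyLogComp, coeff_mk, mul_sum]
  refine sum_congr rfl fun p _ => ?_
  have hl : ((l + 1).factorial : ℂ) ≠ 0 := by simp [Nat.factorial_ne_zero]
  have hl' : (l.factorial : ℂ) ≠ 0 := by simp [Nat.factorial_ne_zero]
  rw [eq_div_of_mul_eq hl (coeff_oneSubExpNeg_pow_mul_factorial (l + 1) p), Nat.factorial_succ,
    add_comm (l + 1) p, ← add_assoc]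
  push_cast
  field_simp

theorem eq_sum_choose_of_egf_mul_degExp_sub_one {lam x : ℂ} {F b : ℕ → ℂ} {L : ℂ⟦X⟧}
    (hL : constantCoeff L = 0) (hF : egf F * (degExp lam 1 - 1) = L * degExp lam x)
    (hb : egf b * (degExp lam 1 - 1) = X * degExp lam x) (n : ℕ) :
    F n = ∑ l ∈ range (n + 1), n.choose l * (l.factorial * coeff (l + 1) L) * b (n - l) := by
  obtain ⟨M, rfl⟩ := X_dvd_iff.mpr hL
  have hM : egf F = M * egf b := mul_right_cancel₀ (degExp_one_sub_one_ne_zero lam) <| by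
    rw [hF, mul_assoc M, hb]
    ring
  rw [← egf_factorial_mul_coeff M, egf_mul] at hM
  rw [congrFun (egf_injective hM) n, Nat.sum_antidiagonal_eq_sum_range_succ
    (fun i j => (n.choose i : ℂ) * (i.factorial * coeff i M) * b j)]
  simp only [coeff_succ_X_mul]

theorem rescale_egf_mul_degExp_sub_one {mu y : ℂ} {B : ℕ → ℂ}
    (hB : egf B * (degExp mu 1 - 1) = X * degExp mu y) (c : ℂ) :
    rescale c (egf B) * (degExp (c * mu) c - 1) = C c * X * degExp (c * mu) (c * y) := by
  simpa [rescale_degExp, rescale_X] using congrArg (rescale c) hB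

theorem C_mul_egf_eq_sum_rescale_egf {β : ℂ → ℕ → ℂ → ℂ}
    (hβ : ∀ mu x, egf (β mu · x) * (degExp mu 1 - 1) = X * degExp mu x) (lam x : ℂ) {d : ℕ}
    (hd : d ≠ 0) :
    C (d : ℂ) * egf (β lam · x) =
      ∑ a ∈ range d, rescale (d : ℂ) (egf (β (lam / d) · ((a + x) / d))) := by
  have hd' : (d : ℂ) ≠ 0 := Nat.cast_ne_zero.mpr hd
  have hgeom : ∑ a ∈ range d, degExp lam 1 ^ a ≠ 0 := fun h => by
    simpa [constantCoeff_degExp, hd] using congrArg constantCoeff h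
  refine mul_right_cancel₀ (mul_ne_zero hgeom (degExp_one_sub_one_ne_zero lam)) ?_
  have hrescale (a : ℕ) := rescale_egf_mul_degExp_sub_one (hβ (lam / d) ((a + x) / d)) d
  simp only [mul_div_cancel₀ _ hd'] at hrescale
  calc C (d : ℂ) * egf (β lam · x) * ((∑ a ∈ range d, degExp lam 1 ^ a) * (degExp lam 1 - 1))
      = C (d : ℂ) * X * ((∑ a ∈ range d, degExp lam 1 ^ a) * degExp lam x) := by
        linear_combination (C (d : ℂ) * ∑ a ∈ range d, degExp lam 1 ^ a) * hβ lam x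
    _ = C (d : ℂ) * X * ∑ a ∈ range d, degExp lam (a + x) := by
        simp only [sum_mul, degExp_one_pow, degExp_add]
    _ = ∑ a ∈ range d,
          rescale (d : ℂ) (egf (β (lam / d) · ((a + x) / d))) * (degExp lam d - 1) := by
        rw [mul_sum]
        exact sum_congr rfl fun a _ => (hrescale a).symm
    _ = _ := by rw [← sum_mul, geom_sum_mul, degExp_one_pow]

theorem degBernoulli_multiplication {β : ℂ → ℕ → ℂ → ℂ}
    (hβ : ∀ mu x, egf (β mu · x) * (degExp mu 1 - 1) = X * degExp mu x) (lam x : ℂ) {d : ℕ}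
    (hd : d ≠ 0) (n : ℕ) :
    β lam n x = ∑ a ∈ range d, β (lam / d) n ((a + x) / d) * (d : ℂ) ^ ((n : ℤ) - 1) := by
  have hd' : (d : ℂ) ≠ 0 := Nat.cast_ne_zero.mpr hd
  have h := congrArg (coeff n) (C_mul_egf_eq_sum_rescale_egf hβ lam x hd)
  simp only [coeff_C_mul, map_sum, coeff_rescale, coeff_egf, ← sum_div, ← mul_sum] at h
  rw [← mul_div_assoc, ← mul_div_assoc, div_left_inj' (by simp [Nat.factorial_ne_zero])] at h
  rw [zpow_sub_one₀ hd', zpow_natCast, ← sum_mul]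
  field_simp
  linear_combination h

/-- the multiplication-type formula `βₙ⁽ᵏ⁾(x|λ) = Σ_{a=0}^{d−1}
Σ_{l=0}^{n} Σ_{p=1}^{l+1} C(n,l) ((−1)^{p+l+1}/pᵏ) p! (S₂(l+1,p)/(l+1))
β_{n−l}((a+x)/d | λ/d) d^{n−l−1}` (the exponent `n−l−1` is an integer, possibly `−1`). -/
theorem degenerate_poly_bernoulli_multiplication (k : ℤ) (lam : ℂ) (d : ℕ) (hd : 0 < d)
    (βk : ℕ → ℂ → ℂ) (β : ℂ → ℕ → ℂ → ℂ)
    (hβk : ∀ x : ℂ,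
      (PowerSeries.mk fun n => βk n x / (n.factorial : ℂ)) * (degExp lam 1 - 1)
        = polyLogComp k * degExp lam x)
    (hβ : ∀ mu x : ℂ,
      (PowerSeries.mk fun n => β mu n x / (n.factorial : ℂ)) * (degExp mu 1 - 1)
        = PowerSeries.X * degExp mu x)
    (n : ℕ) (x : ℂ) :
    βk n x = ∑ a ∈ Finset.range d, ∑ l ∈ Finset.range (n + 1), ∑ p ∈ Finset.Icc 1 (l + 1),
      (n.choose l : ℂ) * ((-1 : ℂ) ^ (p + l + 1) / (p : ℂ) ^ k) * (p.factorial : ℂ)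
        * ((S2 (l + 1) p : ℂ) / ((l : ℂ) + 1))
        * β (lam / (d : ℂ)) (n - l) (((a : ℂ) + x) / (d : ℂ))
        * (d : ℂ) ^ ((n : ℤ) - (l : ℤ) - 1) := by
  rw [eq_sum_choose_of_egf_mul_degExp_sub_one (constantCoeff_polyLogComp k) (hβk x) (hβ lam x) n,
    sum_comm]
  refine sum_congr rfl fun l hl => ?_
  rw [factorial_mul_coeff_succ_polyLogComp, degBernoulli_multiplication hβ lam x hd.ne', mul_sum]
  refine sum_congr rfl fun a _ => ?_
  rw [mul_sum, sum_mul]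
  refine sum_congr rfl fun p _ => ?_
  rw [Nat.cast_sub (mem_range_succ_iff.mp hl)]
  ring
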